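/- arXiv:1012.1997 — 5 statements merged into one kernel-verified Lean document; each statement's English description precedes it below -/
import Mathlib

section
/- If f(x_c) ≤ x_c, then for every n ≥ 1 the only critical point of fⁿ in (a,b) is x_c, and fⁿ has a local maximum at x_c with fⁿ(x_c) ≤ x_c. -/
open Set

/-! Since `f` increases strictly up to `x_c` and decreases strictly after it, every `x ≠ x_c` in
`[a, b]` has `f x < f x_c ≤ x_c`, and `f` maps `[a, x_c)` into itself; so the forward orbit of such
an `x` stays in `[a, x_c)`, where `f' > 0`. By the chain rule `(fⁿ)'(x)` is `f'(x)` times a positive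
product, hence has the sign of `f'(x)`: `fⁿ` has the same monotonicity pattern as `f`, with its
only critical point at `x_c`. -/

theorem hasDerivAt_iterate {𝕜 : Type*} [NontriviallyNormedField 𝕜] {f : 𝕜 → 𝕜}
    (hf : Differentiable 𝕜 f) (n : ℕ) (x : 𝕜) :
    HasDerivAt f^[n] (∏ k ∈ Finset.range n, deriv f (f^[k] x)) x := by
  induction n with
  | zero => simpa using hasDerivAt_id x
  | succ n ih =>
    rw [Function.iterate_succ', Finset.prod_range_succ, mul_comm]
    exact (hf _).hasDerivAt.comp x ih

theorem deriv_iterate_succ {𝕜 : Type*} [NontriviallyNormedField 𝕜] {f : 𝕜 → 𝕜}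
    (hf : Differentiable 𝕜 f) (n : ℕ) (x : 𝕜) :
    deriv f^[n + 1] x = deriv f x * ∏ k ∈ Finset.range n, deriv f (f^[k + 1] x) := by
  rw [(hasDerivAt_iterate hf (n + 1) x).deriv, Finset.prod_range_succ']
  simp only [Function.iterate_zero, id_eq]
  ring

section Unimodal

variable {f : ℝ → ℝ} {a b c : ℝ}

theorem apply_lt_apply_of_deriv_pos_of_deriv_neg (hf : ContinuousOn f (Icc a b))
    (hup : ∀ x ∈ Ioo a c, 0 < deriv f x) (hdn : ∀ x ∈ Ioo c b, deriv f x < 0)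
    (hc : c ∈ Icc a b) {x : ℝ} (hx : x ∈ Icc a b) (hne : x ≠ c) : f x < f c := by
  rcases hne.lt_or_gt with hlt | hgt
  · have hmono : StrictMonoOn f (Icc a c) :=
      strictMonoOn_of_deriv_pos (convex_Icc a c)
        (hf.mono (Icc_subset_Icc_right hc.2))
        (by simpa only [interior_Icc] using hup)
    exact hmono ⟨hx.1, hlt.le⟩ ⟨hc.1, le_rfl⟩ hlt
  · have hanti : StrictAntiOn f (Icc c b) :=
      strictAntiOn_of_deriv_neg (convex_Icc c b)
        (hf.mono (Icc_subset_Icc_left hc.1))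
        (by simpa only [interior_Icc] using hdn)
    exact hanti ⟨le_rfl, hc.2⟩ ⟨hgt.le, hx.2⟩ hgt

theorem isLocalMax_of_deriv_pos_of_deriv_neg (hf : ContinuousOn f (Icc a b))
    (hup : ∀ x ∈ Ioo a c, 0 < deriv f x) (hdn : ∀ x ∈ Ioo c b, deriv f x < 0)
    (hc : c ∈ Ioo a b) : IsLocalMax f c := by
  refine IsMaxOn.isLocalMax (isMaxOn_iff.2 fun x hx => ?_) (Icc_mem_nhds hc.1 hc.2)
  rcases eq_or_ne x c with rfl | hne
  · exact le_rfl
  · exact (apply_lt_apply_of_deriv_pos_of_deriv_neg hf hup hdn (Ioo_subset_Icc_self hc) hx hne).le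

theorem mapsTo_iterate_succ_diff_singleton_Ico (hmap : MapsTo f (Icc a b) (Icc a b))
    (hcb : c ≤ b) (hmax : ∀ x ∈ Icc a b, x ≠ c → f x < f c) (hc : f c ≤ c) (k : ℕ) :
    MapsTo f^[k + 1] (Icc a b \ {c}) (Ico a c) := by
  have hstep : MapsTo f (Icc a b \ {c}) (Ico a c) := fun x hx =>
    ⟨(hmap hx.1).1, (hmax x hx.1 hx.2).trans_le hc⟩
  have hIco : Ico a c ⊆ Icc a b \ {c} := fun y hy =>
    ⟨⟨hy.1, hy.2.le.trans hcb⟩, hy.2.ne⟩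
  rw [Function.iterate_succ']
  exact hstep.comp ((hstep.mono_right hIco).iterate k)

end Unimodal

theorem low_critical_value_unique_crit_general
    (a b x_c : ℝ) (f : ℝ → ℝ)
    (hmap : Set.MapsTo f (Set.Icc a b) (Set.Icc a b))
    (hf : ContDiff ℝ 2 f)
    (hxc : x_c ∈ Set.Ioo a b)
    (hup : ∀ x ∈ Set.Ico a x_c, 0 < deriv f x)
    (hdn : ∀ x ∈ Set.Ioc x_c b, deriv f x < 0)
    (hc : f x_c ≤ x_c) :
    ∀ n : ℕ, 1 ≤ n →
      (∀ x ∈ Ioo a b, (deriv (f^[n]) x = 0 ↔ x = x_c)) ∧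
      IsLocalMax (f^[n]) x_c ∧ f^[n] x_c ≤ x_c := by
  have hd : Differentiable ℝ f := hf.differentiable (by norm_num)
  have hup' : ∀ x ∈ Ioo a x_c, 0 < deriv f x := fun x hx => hup x ⟨hx.1.le, hx.2⟩
  have hdn' : ∀ x ∈ Ioo x_c b, deriv f x < 0 := fun x hx => hdn x ⟨hx.1, hx.2.le⟩
  have hcont : ContinuousOn f (Icc a b) := hd.continuous.continuousOn
  have hmax : ∀ x ∈ Icc a b, x ≠ x_c → f x < f x_c := fun _ hx hne =>
    apply_lt_apply_of_deriv_pos_of_deriv_neg hcont hup' hdn' (Ioo_subset_Icc_self hxc) hx hne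
  have hcrit : deriv f x_c = 0 :=
    (isLocalMax_of_deriv_pos_of_deriv_neg hcont hup' hdn' hxc).deriv_eq_zero
  intro n hn
  obtain ⟨n, rfl⟩ := Nat.exists_eq_add_of_le' hn
  have horbit : ∀ x ∈ Ioo a b, x ≠ x_c →
      0 < ∏ k ∈ Finset.range n, deriv f (f^[k + 1] x) := fun _ hx hne =>
    Finset.prod_pos fun k _ => hup _ <| mapsTo_iterate_succ_diff_singleton_Ico hmap hxc.2.le
      hmax hc k ⟨Ioo_subset_Icc_self hx, hne⟩
  have hpos : ∀ x ∈ Ioo a x_c, 0 < deriv f^[n + 1] x := fun x hx => by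
    rw [deriv_iterate_succ hd]
    exact mul_pos (hup' x hx) (horbit x ⟨hx.1, hx.2.trans hxc.2⟩ hx.2.ne)
  have hneg : ∀ x ∈ Ioo x_c b, deriv f^[n + 1] x < 0 := fun x hx => by
    rw [deriv_iterate_succ hd]
    exact mul_neg_of_neg_of_pos (hdn' x hx) (horbit x ⟨hxc.1.trans hx.1, hx.2⟩ hx.1.ne')
  refine ⟨fun x hx => ⟨fun h0 => ?_, ?_⟩, ?_, ?_⟩
  · by_contra hne
    rcases Ne.lt_or_gt hne with hlt | hgt
    · exact (hpos x ⟨hx.1, hlt⟩).ne' h0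
    · exact (hneg x ⟨hgt, hx.2⟩).ne h0
  · rintro rfl
    rw [deriv_iterate_succ hd, hcrit, zero_mul]
  · exact isLocalMax_of_deriv_pos_of_deriv_neg (hd.continuous.iterate _).continuousOn hpos hneg hxc
  · rw [Function.iterate_succ_apply']
    have hxc_mem : f^[n] x_c ∈ Icc a b := hmap.iterate n (Ioo_subset_Icc_self hxc)
    rcases eq_or_ne (f^[n] x_c) x_c with h | h
    · rw [h]; exact hc
    · exact ((hmax _ hxc_mem h).trans_le hc).le

theorem low_critical_value_unique_crit
    (a b x_c : ℝ) (f : ℝ → ℝ) (hab : a < b)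
    (hmap : Set.MapsTo f (Set.Icc a b) (Set.Icc a b))
    (hf : ContDiff ℝ 2 f)
    (hxc : x_c ∈ Set.Ioo a b)
    (h2 : deriv (deriv f) x_c < 0)
    (hup : ∀ x ∈ Set.Ico a x_c, 0 < deriv f x)
    (hdn : ∀ x ∈ Set.Ioc x_c b, deriv f x < 0)
    (hc : f x_c ≤ x_c) :
    ∀ n : ℕ, 1 ≤ n →
      (∀ x ∈ Ioo a b, (deriv (f^[n]) x = 0 ↔ x = x_c)) ∧
      IsLocalMax (f^[n]) x_c ∧ f^[n] x_c ≤ x_c :=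
  low_critical_value_unique_crit_general a b x_c f hmap hf hxc hup hdn hc
end

section
/- For n ≥ 2, if fᵏ(x_c) ≠ x_c for all 1 ≤ k ≤ n-1, then (fⁿ)''(x_c) ≠ 0 and sign((fⁿ)''(x_c)) = −ε₁·ε₂···ε_{n-1}, where εₖ = 1 if fᵏ(x_c) < x_c and εₖ = −1 if fᵏ(x_c) > x_c. -/
/-!
By the chain rule `(fⁿ)'(x) = ∏_{k<n} f'(fᵏ x)`. Writing `fⁿ = fⁿ⁻¹ ∘ f` and differentiating once
more at `x_c`, the term carrying the factor `f'(x_c) = 0` drops out, so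
`(fⁿ)''(x_c) = f''(x_c) · ∏_{k=1}^{n-1} f'(fᵏ x_c)`. Each `fᵏ x_c` lies in `[a, b]` and differs
from `x_c`, so `f'(fᵏ x_c)` has sign `εₖ`, while `f''(x_c) < 0`.
-/

open Set

theorem Real.sign_eq_coe_sign (r : ℝ) : Real.sign r = ((SignType.sign r : SignType) : ℝ) := by
  rcases lt_trichotomy r 0 with h | rfl | h
  · simp [Real.sign_of_neg h, _root_.sign_neg h]
  · simp [Real.sign_zero]
  · simp [Real.sign_of_pos h, _root_.sign_pos h]

theorem Real.sign_mul (x y : ℝ) : Real.sign (x * y) = Real.sign x * Real.sign y := by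
  simp only [Real.sign_eq_coe_sign, _root_.sign_mul, SignType.coe_mul]

theorem Real.sign_prod {ι : Type*} (s : Finset ι) (g : ι → ℝ) :
    Real.sign (∏ i ∈ s, g i) = ∏ i ∈ s, Real.sign (g i) := by
  simp only [Real.sign_eq_coe_sign]
  exact map_prod (SignType.castHom.comp signHom) g s

section

variable {𝕜 : Type*} [NontriviallyNormedField 𝕜]

theorem deriv_iterate {f : 𝕜 → 𝕜} (hf : Differentiable 𝕜 f) (n : ℕ) :
    deriv f^[n] = fun x ↦ ∏ k ∈ Finset.range n, deriv f (f^[k] x) := by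
  induction n with
  | zero => funext x; simp
  | succ n ih =>
    funext x
    rw [Function.iterate_succ, deriv_comp x ((hf.iterate n) (f x)) (hf x), ih,
      Finset.prod_range_succ']
    simp only [Function.iterate_succ_apply, Function.iterate_zero_apply]

theorem deriv_deriv_comp_of_deriv_eq_zero {g h : 𝕜 → 𝕜} {c : 𝕜} (hg : Differentiable 𝕜 g)
    (hh : Differentiable 𝕜 h) (hg' : DifferentiableAt 𝕜 (deriv g) (h c))
    (hh' : DifferentiableAt 𝕜 (deriv h) c) (hc : deriv h c = 0) :
    deriv (deriv (g ∘ h)) c = deriv g (h c) * deriv (deriv h) c := by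
  have hcomp : deriv (g ∘ h) = fun x ↦ deriv g (h x) * deriv h x :=
    funext fun x ↦ deriv_comp x (hg (h x)) (hh x)
  rw [hcomp]
  refine ((hg'.hasDerivAt.comp c (hh c).hasDerivAt).fun_mul hh'.hasDerivAt).deriv.trans ?_
  simp only [hc, Function.comp_apply]
  ring

theorem deriv_deriv_iterate_succ_of_deriv_eq_zero {f : 𝕜 → 𝕜} {c : 𝕜} (hf : Differentiable 𝕜 f)
    (hf' : Differentiable 𝕜 (deriv f)) (hc : deriv f c = 0) (m : ℕ) :
    deriv (deriv f^[m + 1]) c = deriv (deriv f) c * ∏ k ∈ Finset.Icc 1 m, deriv f (f^[k] c) := by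
  have hdiff : Differentiable 𝕜 (deriv f^[m]) := by
    rw [deriv_iterate hf]
    exact Differentiable.fun_finsetProd fun k _ ↦ hf'.comp (hf.iterate k)
  have hreindex : ∏ k ∈ Finset.range m, deriv f (f^[k + 1] c) =
      ∏ k ∈ Finset.Icc 1 m, deriv f (f^[k] c) := by
    rw [Finset.range_eq_Ico, Finset.prod_Ico_add' (fun k ↦ deriv f (f^[k] c))]
    rfl
  rw [Function.iterate_succ,
    deriv_deriv_comp_of_deriv_eq_zero (hf.iterate m) hf (hdiff _) (hf' c) hc, deriv_iterate hf,
    ← hreindex, mul_comm]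
  simp only [Function.iterate_succ_apply]

end

theorem ContinuousAt.eq_zero_of_pos_of_neg {g : ℝ → ℝ} {a b c : ℝ} (hg : ContinuousAt g c)
    (hac : a < c) (hcb : c < b) (hpos : ∀ x ∈ Ico a c, 0 < g x) (hneg : ∀ x ∈ Ioc c b, g x < 0) :
    g c = 0 := by
  apply le_antisymm
  · refine le_of_tendsto (hg.continuousWithinAt (s := Ioi c)).tendsto ?_
    filter_upwards [Ioc_mem_nhdsGT hcb] with x hx using (hneg x hx).le
  · refine ge_of_tendsto (hg.continuousWithinAt (s := Iio c)).tendsto ?_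
    filter_upwards [Ico_mem_nhdsLT hac] with x hx using (hpos x hx).le

theorem Real.sign_eq_ite_of_pos_of_neg {g : ℝ → ℝ} {a b c x : ℝ}
    (hpos : ∀ x ∈ Ico a c, 0 < g x) (hneg : ∀ x ∈ Ioc c b, g x < 0)
    (hx : x ∈ Icc a b) (hxc : x ≠ c) :
    Real.sign (g x) = if x < c then 1 else -1 := by
  split_ifs with hlt
  · exact Real.sign_of_pos (hpos x ⟨hx.1, hlt⟩)
  · exact Real.sign_of_neg (hneg x ⟨lt_of_le_of_ne (not_lt.mp hlt) hxc.symm, hx.2⟩)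

theorem sign_of_second_derivative_at_crit_general
    (a b x_c : ℝ) (f : ℝ → ℝ)
    (hmap : Set.MapsTo f (Set.Icc a b) (Set.Icc a b))
    (hf : ContDiff ℝ 2 f)
    (hxc : x_c ∈ Set.Ioo a b)
    (h2 : deriv (deriv f) x_c < 0)
    (hup : ∀ x ∈ Set.Ico a x_c, 0 < deriv f x)
    (hdn : ∀ x ∈ Set.Ioc x_c b, deriv f x < 0)
    (n : ℕ) (hn : 2 ≤ n)
    (hnc : ∀ k : ℕ, 1 ≤ k → k ≤ n - 1 → f^[k] x_c ≠ x_c) :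
    deriv (deriv (f^[n])) x_c ≠ 0 ∧
    Real.sign (deriv (deriv (f^[n])) x_c) =
      - ∏ k ∈ Finset.Icc 1 (n - 1),
          (if f^[k] x_c < x_c then (1 : ℝ) else -1) := by
  obtain ⟨m, rfl⟩ : ∃ m, n = m + 1 := ⟨n - 1, by omega⟩
  rw [Nat.add_sub_cancel]
  have hcrit : deriv f x_c = 0 :=
    (hf.continuous_deriv (by norm_num)).continuousAt.eq_zero_of_pos_of_neg hxc.1 hxc.2 hup hdn
  have hsign : Real.sign (deriv (deriv f^[m + 1]) x_c) =
      - ∏ k ∈ Finset.Icc 1 m, (if f^[k] x_c < x_c then (1 : ℝ) else -1) := by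
    rw [deriv_deriv_iterate_succ_of_deriv_eq_zero (hf.differentiable (by norm_num))
      hf.differentiable_deriv_two hcrit, Real.sign_mul, Real.sign_of_neg h2, Real.sign_prod,
      neg_one_mul]
    refine congrArg _ (Finset.prod_congr rfl fun k hk ↦ ?_)
    rw [Finset.mem_Icc] at hk
    exact Real.sign_eq_ite_of_pos_of_neg hup hdn (hmap.iterate k ⟨hxc.1.le, hxc.2.le⟩)
      (hnc k hk.1 (by omega))
  refine ⟨fun h ↦ ?_, hsign⟩
  rw [h, Real.sign_zero, eq_comm, neg_eq_zero, Finset.prod_eq_zero_iff] at hsign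
  obtain ⟨k, -, hk⟩ := hsign
  split_ifs at hk <;> norm_num at hk

theorem sign_of_second_derivative_at_crit
    (a b x_c : ℝ) (f : ℝ → ℝ) (hab : a < b)
    (hmap : Set.MapsTo f (Set.Icc a b) (Set.Icc a b))
    (hf : ContDiff ℝ 2 f)
    (hxc : x_c ∈ Set.Ioo a b)
    (h2 : deriv (deriv f) x_c < 0)
    (hup : ∀ x ∈ Set.Ico a x_c, 0 < deriv f x)
    (hdn : ∀ x ∈ Set.Ioc x_c b, deriv f x < 0)
    (n : ℕ) (hn : 2 ≤ n)
    (hnc : ∀ k : ℕ, 1 ≤ k → k ≤ n - 1 → f^[k] x_c ≠ x_c) :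
    deriv (deriv (f^[n])) x_c ≠ 0 ∧
    Real.sign (deriv (deriv (f^[n])) x_c) =
      - ∏ k ∈ Finset.Icc 1 (n - 1),
          (if f^[k] x_c < x_c then (1 : ℝ) else -1) :=
  sign_of_second_derivative_at_crit_general a b x_c f hmap hf hxc h2 hup hdn n hn hnc
end

section
/- Suppose f(x_c) > x_c and fᵏ(a) < x_c, fᵏ(b) < x_c for all k ≥ 1. Let x_k = min S^k be the leftmost critical point of fᵏ. Then for all k ≥ 2: x_k < x_{k-1}, fᵏ has a local maximum at x_k with (fᵏ)''(x_k) < 0, and fᵏ(x_k) = f(x_c) > x_c. -/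
/-!
By induction on `k`, the leftmost critical point `x_{k+1}` of `f^[k+1]` is the first point to the
right of `a` whose orbit hits `x_c` at time `k`, all orbits starting in `[a, x_{k+1})` staying
below `x_c` up to that time. On `[a, x_{k+1}]` the map `f^[k+1]` is then strictly increasing, from
`f^[k+1] a < x_c` up to `f x_c > x_c`, so it takes the value `x_c` at a first point `y < x_{k+1}`;
the chain rule makes `y` the leftmost critical point of `f^[k+2]`, and there
`(f^[k+2])'' = f''(x_c) ((f^[k+1])'(y))² < 0`.
-/

open Set Function

theorem ContDiff.iterate {𝕜 E : Type*} [NontriviallyNormedField 𝕜] [NormedAddCommGroup E]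
    [NormedSpace 𝕜 E] {n : WithTop ℕ∞} {f : E → E} (hf : ContDiff 𝕜 n f) (k : ℕ) :
    ContDiff 𝕜 n (f^[k]) := by
  induction k with
  | zero => exact contDiff_id
  | succ k ih => rw [iterate_succ']; exact hf.comp ih

section Deriv

variable {𝕜 : Type*} [NontriviallyNormedField 𝕜]

theorem deriv_iterate_eq_prod {f : 𝕜 → 𝕜} (hf : Differentiable 𝕜 f) (k : ℕ) (x : 𝕜) :
    deriv (f^[k]) x = ∏ i ∈ Finset.range k, deriv f (f^[i] x) := by
  induction k with
  | zero => simp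
  | succ k ih =>
    rw [iterate_succ', deriv_comp x (hf _) ((hf.iterate k) x), ih, Finset.prod_range_succ,
      mul_comm]

theorem deriv_deriv_comp_of_deriv_eq_zero_s9 {g h : 𝕜 → 𝕜} (hg : ContDiff 𝕜 2 g)
    (hh : ContDiff 𝕜 2 h) {y : 𝕜} (hy : deriv g (h y) = 0) :
    deriv (deriv (g ∘ h)) y = deriv (deriv g) (h y) * deriv h y ^ 2 := by
  have hg₁ : Differentiable 𝕜 g := hg.differentiable (by norm_num)
  have hh₁ : Differentiable 𝕜 h := hh.differentiable (by norm_num)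
  have hchain : deriv (g ∘ h) = fun x => deriv g (h x) * deriv h x :=
    funext fun x => deriv_comp x (hg₁ _) (hh₁ x)
  have hdg : deriv (fun x => deriv g (h x)) y = deriv (deriv g) (h y) * deriv h y :=
    deriv_comp y (hg.differentiable_deriv_two _) (hh₁ y)
  rw [hchain, deriv_fun_mul (c := fun x => deriv g (h x))
    ((hg.differentiable_deriv_two _).comp y (hh₁ y)) (hh.differentiable_deriv_two y), hdg, hy, zero_mul, add_zero, mul_assoc, sq]

end Deriv

def IsFirstHit (f : ℝ → ℝ) (a c : ℝ) (k : ℕ) (s : ℝ) : Prop :=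
  f^[k] s = c ∧ ∀ x ∈ Ico a s, ∀ i ≤ k, f^[i] x < c

namespace IsFirstHit

variable {f : ℝ → ℝ} {a c s t : ℝ} {k : ℕ}

theorem zero : IsFirstHit f a c 0 c :=
  ⟨rfl, fun _ hx _ hi => by rw [Nat.le_zero.1 hi]; exact hx.2⟩

theorem iterate_succ_eq (hs : IsFirstHit f a c k s) : f^[k + 1] s = f c := by
  rw [iterate_succ_apply', hs.1]

theorem lt_of_succ (hc : c < f c) (hs : IsFirstHit f a c k s) (has : a ≤ s)
    (ht : IsFirstHit f a c (k + 1) t) : t < s := by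
  by_contra! hst
  rcases hst.eq_or_lt with rfl | hst
  · exact hc.ne (ht.1.symm.trans hs.iterate_succ_eq)
  · exact (hs.iterate_succ_eq ▸ ht.2 s ⟨has, hst⟩ (k + 1) le_rfl).not_gt hc

end IsFirstHit

section Unimodal

variable {f : ℝ → ℝ} {a b c s : ℝ} {k : ℕ}

theorem deriv_iterate_pos_of_forall_lt (hf : Differentiable ℝ f)
    (hmap : MapsTo f (Icc a b) (Icc a b)) (hup : ∀ x ∈ Ico a c, 0 < deriv f x) {x : ℝ}
    (hx : x ∈ Icc a b) (hlt : ∀ i < k, f^[i] x < c) : 0 < deriv (f^[k]) x := by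
  rw [deriv_iterate_eq_prod hf]
  exact Finset.prod_pos fun i hi =>
    hup _ ⟨(hmap.iterate i hx).1, hlt i (Finset.mem_range.1 hi)⟩

theorem IsFirstHit.strictMonoOn (hf : Differentiable ℝ f)
    (hmap : MapsTo f (Icc a b) (Icc a b)) (hup : ∀ x ∈ Ico a c, 0 < deriv f x)
    (hs : IsFirstHit f a c k s) (hsb : s ≤ b) : StrictMonoOn (f^[k + 1]) (Icc a s) := by
  refine strictMonoOn_of_deriv_pos (convex_Icc a s) (hf.iterate _).continuous.continuousOn
    fun x hx => ?_
  rw [interior_Icc] at hx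
  exact deriv_iterate_pos_of_forall_lt hf hmap hup ⟨hx.1.le, hx.2.le.trans hsb⟩
    fun i hi => hs.2 x ⟨hx.1.le, hx.2⟩ i (Nat.lt_succ_iff.1 hi)

theorem IsFirstHit.exists_succ (hf : Differentiable ℝ f)
    (hmap : MapsTo f (Icc a b) (Icc a b)) (hup : ∀ x ∈ Ico a c, 0 < deriv f x)
    (hc : c < f c) (ha : f^[k + 1] a < c) (hs : IsFirstHit f a c k s) (has : a ≤ s)
    (hsb : s ≤ b) : ∃ t ∈ Ioo a s, IsFirstHit f a c (k + 1) t := by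
  have hmono := hs.strictMonoOn hf hmap hup hsb
  obtain ⟨t, ht, hft⟩ := intermediate_value_Ioo has (hf.iterate _).continuous.continuousOn
    ⟨ha, hs.iterate_succ_eq ▸ hc⟩
  refine ⟨t, ht, hft, fun x hx i hi => ?_⟩
  rcases Nat.lt_or_eq_of_le hi with hi | rfl
  · exact hs.2 x ⟨hx.1, hx.2.trans ht.2⟩ i (Nat.lt_succ_iff.1 hi)
  · exact hft ▸ hmono ⟨hx.1, (hx.2.trans ht.2).le⟩ ⟨ht.1.le, ht.2.le⟩ hx.2

theorem IsFirstHit.isLeast_deriv_iterate_eq_zero (hf : Differentiable ℝ f)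
    (hmap : MapsTo f (Icc a b) (Icc a b)) (hup : ∀ x ∈ Ico a c, 0 < deriv f x)
    (hfc : deriv f c = 0) (hs : IsFirstHit f a c k s) (hsI : s ∈ Icc a b) :
    IsLeast {x ∈ Icc a b | deriv (f^[k + 1]) x = 0} s := by
  refine ⟨⟨hsI, ?_⟩, fun x ⟨hx, hx0⟩ => not_lt.1 fun hxs => ?_⟩
  · rw [deriv_iterate_eq_prod hf, Finset.prod_range_succ, hs.1, hfc, mul_zero]
  · exact (deriv_iterate_pos_of_forall_lt hf hmap hup hx
      fun i hi => hs.2 x ⟨hx.1, hxs⟩ i (Nat.lt_succ_iff.1 hi)).ne' hx0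

theorem isFirstHit_of_isLeast_deriv_iterate_eq_zero (hf : Differentiable ℝ f)
    (hmap : MapsTo f (Icc a b) (Icc a b)) (hc : c ∈ Ioo a b)
    (hup : ∀ x ∈ Ico a c, 0 < deriv f x) (hfc : deriv f c = 0) (hcf : c < f c)
    (ha : ∀ k : ℕ, f^[k + 1] a < c) {xs : ℕ → ℝ}
    (hxs : ∀ k : ℕ, IsLeast {x ∈ Icc a b | deriv (f^[k + 1]) x = 0} (xs (k + 1))) (k : ℕ) :
    IsFirstHit f a c k (xs (k + 1)) := by
  induction k with
  | zero =>
    rw [(IsFirstHit.zero.isLeast_deriv_iterate_eq_zero hf hmap hup hfc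
      ⟨hc.1.le, hc.2.le⟩).unique (hxs 0)]
    exact IsFirstHit.zero
  | succ k ih =>
    have hsI := (hxs k).1.1
    obtain ⟨t, ht, htk⟩ := ih.exists_succ hf hmap hup hcf (ha k) hsI.1 hsI.2
    rwa [← (htk.isLeast_deriv_iterate_eq_zero hf hmap hup hfc
      ⟨ht.1.le, ht.2.le.trans hsI.2⟩).unique (hxs (k + 1))]

end Unimodal

theorem leftmost_crit_point_positive_max_general
    (a b x_c : ℝ) (f : ℝ → ℝ)
    (hmap : Set.MapsTo f (Set.Icc a b) (Set.Icc a b))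
    (hf : ContDiff ℝ 2 f)
    (hxc : x_c ∈ Set.Ioo a b)
    (h2 : deriv (deriv f) x_c < 0)
    (hup : ∀ x ∈ Set.Ico a x_c, 0 < deriv f x)
    (hdn : ∀ x ∈ Set.Ioc x_c b, deriv f x < 0)
    (hc : f x_c > x_c)
    (hbd : ∀ k : ℕ, 1 ≤ k → f^[k] a < x_c ∧ f^[k] b < x_c)
    (xs : ℕ → ℝ)
    (hxs : ∀ k : ℕ, 1 ≤ k →
      IsLeast {x ∈ Icc a b | deriv (f^[k]) x = 0} (xs k)) :
    ∀ k : ℕ, 2 ≤ k →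
      xs k < xs (k - 1) ∧ deriv (deriv (f^[k])) (xs k) < 0 ∧
      f^[k] (xs k) = f x_c ∧ f x_c > x_c := by
  intro k hk
  obtain ⟨m, rfl⟩ := Nat.exists_eq_add_of_le' hk
  have hfd : Differentiable ℝ f := hf.differentiable (by norm_num)
  have hfc : deriv f x_c = 0 :=
    (isLocalMax_of_deriv_Ioo hxc.1 hxc.2 hfd.continuous.continuousAt hfd.differentiableOn
      hfd.differentiableOn (fun x hx => (hup x ⟨hx.1.le, hx.2⟩).le)
      fun x hx => (hdn x ⟨hx.1, hx.2.le⟩).le).deriv_eq_zero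
  have hxs' (k : ℕ) := hxs (k + 1) (Nat.le_add_left 1 k)
  have hit := isFirstHit_of_isLeast_deriv_iterate_eq_zero hfd hmap hxc hup hfc hc
    (fun k => (hbd (k + 1) (Nat.le_add_left 1 k)).1) hxs'
  have hlt : xs (m + 2) < xs (m + 1) := (hit m).lt_of_succ hc (hxs' m).1.1.1 (hit (m + 1))
  have hpos : 0 < deriv (f^[m + 1]) (xs (m + 2)) :=
    deriv_iterate_pos_of_forall_lt hfd hmap hup (hxs' (m + 1)).1.1
      fun i hi => (hit m).2 _ ⟨(hxs' (m + 1)).1.1.1, hlt⟩ i (Nat.lt_succ_iff.1 hi)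
  refine ⟨hlt, ?_, (hit (m + 1)).iterate_succ_eq, hc⟩
  rw [iterate_succ', deriv_deriv_comp_of_deriv_eq_zero_s9 hf (hf.iterate _)
    (by rw [(hit (m + 1)).1, hfc]), (hit (m + 1)).1]
  exact mul_neg_of_neg_of_pos h2 (pow_pos hpos 2)

theorem leftmost_crit_point_positive_max
    (a b x_c : ℝ) (f : ℝ → ℝ) (hab : a < b)
    (hmap : Set.MapsTo f (Set.Icc a b) (Set.Icc a b))
    (hf : ContDiff ℝ 2 f)
    (hxc : x_c ∈ Set.Ioo a b)
    (h2 : deriv (deriv f) x_c < 0)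
    (hup : ∀ x ∈ Set.Ico a x_c, 0 < deriv f x)
    (hdn : ∀ x ∈ Set.Ioc x_c b, deriv f x < 0)
    (hc : f x_c > x_c)
    (hbd : ∀ k : ℕ, 1 ≤ k → f^[k] a < x_c ∧ f^[k] b < x_c)
    (xs : ℕ → ℝ)
    (hxs : ∀ k : ℕ, 1 ≤ k →
      IsLeast {x ∈ Icc a b | deriv (f^[k]) x = 0} (xs k)) :
    ∀ k : ℕ, 2 ≤ k →
      xs k < xs (k - 1) ∧ deriv (deriv (f^[k])) (xs k) < 0 ∧
      f^[k] (xs k) = f x_c ∧ f x_c > x_c :=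
  leftmost_crit_point_positive_max_general a b x_c f hmap hf hxc h2 hup hdn hc hbd xs hxs
end

section
/- If the kneading sequence γ of f (the itinerary of f(x_c) over the alphabet {I₀, C, I₁}) is periodic with period k, then the Min-Max sequence ω of f is periodic with period k or 2k. In particular, if ω_{k+1} = M⁺ then ω has period k, and otherwise ω_{2k+1} = M⁺ and ω has period 2k. -/
/-!
Near `x_c` the map `f` is strictly increasing on the left and strictly decreasing on the
right. Hence if `fⁿ` has a strict local extremum at `x_c`, then `fⁿ⁺¹ = f ∘ fⁿ` has one of
the same kind when `fⁿ(x_c) < x_c`, of the opposite kind when `fⁿ(x_c) > x_c`, and a maximum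
when `fⁿ(x_c) = x_c`: the Min-Max symbol `ω_{n+1}` is determined by `ω_n` and `γ_n`.
Starting from `ω_1 = M`, an induction along a `k`-periodic kneading sequence shows that
`ω_{n+k}` equals `ω_n` if `ω_{k+1} = M` and is its opposite otherwise, so that `ω` has
period `2k` in the second case. There `f(x_c) > x_c`, since otherwise the whole orbit stays
weakly left of `x_c` and every `ω_n` is `M`.
-/

open Set Topology Filter Function

namespace Real

theorem sign_eq_neg_one_iff {r : ℝ} : sign r = -1 ↔ r < 0 := by
  refine ⟨fun h => ?_, sign_of_neg⟩
  by_contra! hr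
  rcases hr.eq_or_lt with rfl | hr
  · norm_num [sign_zero] at h
  · norm_num [sign_of_pos hr] at h

theorem sign_eq_one_iff {r : ℝ} : sign r = 1 ↔ 0 < r := by
  refine ⟨fun h => ?_, sign_of_pos⟩
  by_contra! hr
  rcases hr.lt_or_eq with hr | rfl
  · norm_num [sign_of_neg hr] at h
  · norm_num [sign_zero] at h

variable {x y c : ℝ}

theorem lt_of_sign_sub_eq_sign_sub (h : sign (x - c) = sign (y - c)) (hy : y < c) : x < c := by
  rwa [← sub_neg, ← sign_eq_neg_one_iff, h, sign_eq_neg_one_iff, sub_neg]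

theorem eq_of_sign_sub_eq_sign_sub (h : sign (x - c) = sign (y - c)) (hy : y = c) : x = c := by
  rwa [← sub_eq_zero, ← sign_eq_zero_iff, h, sign_eq_zero_iff, sub_eq_zero]

theorem gt_of_sign_sub_eq_sign_sub (h : sign (x - c) = sign (y - c)) (hy : c < y) : c < x := by
  rwa [← sub_pos, ← sign_eq_one_iff, h, sign_eq_one_iff, sub_pos]

end Real

section StrictLocalExtr

variable {α β γ : Type*} [TopologicalSpace α] [Preorder β] [Preorder γ]

def IsStrictLocalMax (g : α → β) (c : α) : Prop := ∀ᶠ x in 𝓝[≠] c, g x < g c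

def IsStrictLocalMin (g : α → β) (c : α) : Prop := ∀ᶠ x in 𝓝[≠] c, g c < g x

variable {g : α → β} {h : β → γ} {s : Set β} {c : α}

theorem IsStrictLocalMax.isLocalMax (hg : IsStrictLocalMax g c) : IsLocalMax g c := by
  rw [IsLocalMax, IsMaxFilter, ← nhdsNE_sup_pure, eventually_sup]
  exact ⟨hg.mono fun _ hx => hx.le, eventually_pure.2 le_rfl⟩

theorem IsStrictLocalMin.not_isLocalMax [(𝓝[≠] c).NeBot] (hg : IsStrictLocalMin g c) :
    ¬IsLocalMax g c := fun hmax =>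
  let ⟨_, hle, hlt⟩ := ((hmax.filter_mono nhdsWithin_le_nhds).and hg).exists
  not_lt_of_ge hle hlt

theorem IsStrictLocalMin.not_isStrictLocalMax [(𝓝[≠] c).NeBot] (hg : IsStrictLocalMin g c) :
    ¬IsStrictLocalMax g c := fun hmax => hg.not_isLocalMax hmax.isLocalMax

theorem IsStrictLocalMax.comp_strictMonoOn (hg : IsStrictLocalMax g c) (hh : StrictMonoOn h s)
    (hs : ∀ᶠ x in 𝓝 c, g x ∈ s) : IsStrictLocalMax (h ∘ g) c := by
  filter_upwards [hg, nhdsWithin_le_nhds hs] with x hx hxs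
  exact hh hxs hs.self_of_nhds hx

theorem IsStrictLocalMin.comp_strictMonoOn (hg : IsStrictLocalMin g c) (hh : StrictMonoOn h s)
    (hs : ∀ᶠ x in 𝓝 c, g x ∈ s) : IsStrictLocalMin (h ∘ g) c := by
  filter_upwards [hg, nhdsWithin_le_nhds hs] with x hx hxs
  exact hh hs.self_of_nhds hxs hx

theorem IsStrictLocalMax.comp_strictAntiOn (hg : IsStrictLocalMax g c) (hh : StrictAntiOn h s)
    (hs : ∀ᶠ x in 𝓝 c, g x ∈ s) : IsStrictLocalMin (h ∘ g) c := by
  filter_upwards [hg, nhdsWithin_le_nhds hs] with x hx hxs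
  exact hh hxs hs.self_of_nhds hx

theorem IsStrictLocalMin.comp_strictAntiOn (hg : IsStrictLocalMin g c) (hh : StrictAntiOn h s)
    (hs : ∀ᶠ x in 𝓝 c, g x ∈ s) : IsStrictLocalMax (h ∘ g) c := by
  filter_upwards [hg, nhdsWithin_le_nhds hs] with x hx hxs
  exact hh hs.self_of_nhds hxs hx

end StrictLocalExtr

structure IsUnimodal (f : ℝ → ℝ) (a b c : ℝ) : Prop where
  mem_Ioo : c ∈ Ioo a b
  mapsTo : MapsTo f (Icc a b) (Icc a b)
  continuousOn : ContinuousOn f (Icc a b)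
  strictMonoOn : StrictMonoOn f (Icc a c)
  strictAntiOn : StrictAntiOn f (Icc c b)

namespace IsUnimodal

variable {f : ℝ → ℝ} {a b c x : ℝ} {n k : ℕ}

theorem of_deriv (hc : c ∈ Ioo a b) (hmap : MapsTo f (Icc a b) (Icc a b))
    (hcont : ContinuousOn f (Icc a b)) (hup : ∀ x ∈ Ioo a c, 0 < deriv f x)
    (hdn : ∀ x ∈ Ioo c b, deriv f x < 0) : IsUnimodal f a b c where
  mem_Ioo := hc
  mapsTo := hmap
  continuousOn := hcont
  strictMonoOn := strictMonoOn_of_deriv_pos (convex_Icc a c)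
    (hcont.mono (Icc_subset_Icc_right hc.2.le)) fun x hx => hup x (by rwa [interior_Icc] at hx)
  strictAntiOn := strictAntiOn_of_deriv_neg (convex_Icc c b)
    (hcont.mono (Icc_subset_Icc_left hc.1.le)) fun x hx => hdn x (by rwa [interior_Icc] at hx)

theorem Icc_mem_nhds_crit (hf : IsUnimodal f a b c) : Icc a b ∈ 𝓝 c :=
  Icc_mem_nhds hf.mem_Ioo.1 hf.mem_Ioo.2

theorem eventually_iterate_mem_Icc (hf : IsUnimodal f a b c) (n : ℕ) :
    ∀ᶠ x in 𝓝 c, f^[n] x ∈ Icc a b :=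
  Filter.mem_of_superset hf.Icc_mem_nhds_crit fun _ hx => hf.mapsTo.iterate n hx

theorem eventually_iterate_mem_Icc_left (hf : IsUnimodal f a b c) (h : f^[n] c < c) :
    ∀ᶠ x in 𝓝 c, f^[n] x ∈ Icc a c := by
  have hcont := (hf.continuousOn.iterate hf.mapsTo n).continuousAt hf.Icc_mem_nhds_crit
  filter_upwards [hf.eventually_iterate_mem_Icc n, hcont.eventually_lt_const h] with x hx hlt
  exact ⟨hx.1, hlt.le⟩

theorem eventually_iterate_mem_Icc_right (hf : IsUnimodal f a b c) (h : c < f^[n] c) :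
    ∀ᶠ x in 𝓝 c, f^[n] x ∈ Icc c b := by
  have hcont := (hf.continuousOn.iterate hf.mapsTo n).continuousAt hf.Icc_mem_nhds_crit
  filter_upwards [hf.eventually_iterate_mem_Icc n, hcont.eventually_const_lt h] with x hx hlt
  exact ⟨hlt.le, hx.2⟩

theorem map_lt_map_crit (hf : IsUnimodal f a b c) (hx : x ∈ Icc a b) (hne : x ≠ c) :
    f x < f c := by
  rcases hne.lt_or_gt with h | h
  · exact hf.strictMonoOn ⟨hx.1, h.le⟩ ⟨hf.mem_Ioo.1.le, le_rfl⟩ h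
  · exact hf.strictAntiOn ⟨le_rfl, hf.mem_Ioo.2.le⟩ ⟨h.le, hx.2⟩ h

theorem map_le_map_crit (hf : IsUnimodal f a b c) (hx : x ∈ Icc a b) : f x ≤ f c := by
  rcases eq_or_ne x c with rfl | hne
  · exact le_rfl
  · exact (hf.map_lt_map_crit hx hne).le

theorem isStrictLocalMax (hf : IsUnimodal f a b c) : IsStrictLocalMax f c := by
  filter_upwards [self_mem_nhdsWithin, nhdsWithin_le_nhds hf.Icc_mem_nhds_crit] with x hne hx
  exact hf.map_lt_map_crit hx hne

theorem isStrictLocalMax_iterate_succ_of_eq (hf : IsUnimodal f a b c)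
    (hextr : IsStrictLocalMax (f^[n]) c ∨ IsStrictLocalMin (f^[n]) c) (h : f^[n] c = c) :
    IsStrictLocalMax (f^[n + 1]) c := by
  have hne : ∀ᶠ x in 𝓝[≠] c, f^[n] x ≠ c := by
    rcases hextr with hmax | hmin
    · exact hmax.mono fun _ hx => h ▸ hx.ne
    · exact hmin.mono fun _ hx => h ▸ hx.ne'
  filter_upwards [hne, nhdsWithin_le_nhds (hf.eventually_iterate_mem_Icc n)] with x hne hx
  rw [iterate_succ_apply', iterate_succ_apply', h]
  exact hf.map_lt_map_crit hx hne

theorem isStrictLocalMax_or_isStrictLocalMin_iterate (hf : IsUnimodal f a b c) (hn : 1 ≤ n) :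
    IsStrictLocalMax (f^[n]) c ∨ IsStrictLocalMin (f^[n]) c := by
  induction n, hn using Nat.le_induction with
  | base => exact .inl (by simpa using hf.isStrictLocalMax)
  | succ n _ ih =>
    rw [iterate_succ']
    rcases lt_trichotomy (f^[n] c) c with h | h | h
    · have hs := hf.eventually_iterate_mem_Icc_left h
      exact ih.imp (·.comp_strictMonoOn hf.strictMonoOn hs)
        (·.comp_strictMonoOn hf.strictMonoOn hs)
    · exact .inl (iterate_succ' f n ▸ hf.isStrictLocalMax_iterate_succ_of_eq ih h)
    · have hs := hf.eventually_iterate_mem_Icc_right h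
      exact ih.symm.imp (·.comp_strictAntiOn hf.strictAntiOn hs)
        (·.comp_strictAntiOn hf.strictAntiOn hs)

theorem isStrictLocalMin_iterate_iff (hf : IsUnimodal f a b c) (hn : 1 ≤ n) :
    IsStrictLocalMin (f^[n]) c ↔ ¬IsStrictLocalMax (f^[n]) c :=
  ⟨IsStrictLocalMin.not_isStrictLocalMax,
    (hf.isStrictLocalMax_or_isStrictLocalMin_iterate hn).resolve_left⟩

theorem isLocalMax_iterate_iff (hf : IsUnimodal f a b c) (hn : 1 ≤ n) :
    IsLocalMax (f^[n]) c ↔ IsStrictLocalMax (f^[n]) c :=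
  ⟨fun hmax => by_contra fun h => ((hf.isStrictLocalMin_iterate_iff hn).2 h).not_isLocalMax hmax,
    IsStrictLocalMax.isLocalMax⟩

theorem isStrictLocalMax_iterate_succ_iff_of_lt (hf : IsUnimodal f a b c) (hn : 1 ≤ n)
    (h : f^[n] c < c) : IsStrictLocalMax (f^[n + 1]) c ↔ IsStrictLocalMax (f^[n]) c := by
  have hs := hf.eventually_iterate_mem_Icc_left h
  rw [iterate_succ']
  refine ⟨fun hmax => by_contra fun hn' => ?_, (·.comp_strictMonoOn hf.strictMonoOn hs)⟩
  exact (((hf.isStrictLocalMin_iterate_iff hn).2 hn').comp_strictMonoOn hf.strictMonoOn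
    hs).not_isStrictLocalMax hmax

theorem isStrictLocalMax_iterate_succ_iff_of_gt (hf : IsUnimodal f a b c) (hn : 1 ≤ n)
    (h : c < f^[n] c) : IsStrictLocalMax (f^[n + 1]) c ↔ ¬IsStrictLocalMax (f^[n]) c := by
  have hs := hf.eventually_iterate_mem_Icc_right h
  rw [iterate_succ']
  refine ⟨fun hmax hn' => (hn'.comp_strictAntiOn hf.strictAntiOn hs).not_isStrictLocalMax hmax,
    fun hn' => ?_⟩
  exact ((hf.isStrictLocalMin_iterate_iff hn).2 hn').comp_strictAntiOn hf.strictAntiOn hs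

theorem isStrictLocalMax_iterate_of_map_le (hf : IsUnimodal f a b c) (hfc : f c ≤ c)
    (hn : 1 ≤ n) : IsStrictLocalMax (f^[n]) c := by
  have hle : ∀ m, f^[m + 1] c ≤ c := fun m => by
    rw [iterate_succ_apply']
    exact (hf.map_le_map_crit (hf.mapsTo.iterate m (Ioo_subset_Icc_self hf.mem_Ioo))).trans hfc
  induction n, hn using Nat.le_induction with
  | base => simpa using hf.isStrictLocalMax
  | succ n hn ih =>
    obtain ⟨m, rfl⟩ : ∃ m, n = m + 1 := ⟨n - 1, by omega⟩
    rcases (hle m).lt_or_eq with h | h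
    · exact (hf.isStrictLocalMax_iterate_succ_iff_of_lt hn h).2 ih
    · exact hf.isStrictLocalMax_iterate_succ_of_eq (.inl ih) h

theorem isStrictLocalMax_iterate_add_iff (hf : IsUnimodal f a b c) (hk : 1 ≤ k)
    (hγ : ∀ n : ℕ, 1 ≤ n → Real.sign (f^[n + k] c - c) = Real.sign (f^[n] c - c))
    (hn : 1 ≤ n) : IsStrictLocalMax (f^[n + k]) c ↔
      (IsStrictLocalMax (f^[n]) c ↔ IsStrictLocalMax (f^[k + 1]) c) := by
  induction n, hn using Nat.le_induction with
  | base =>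
    rw [Nat.add_comm 1 k, iterate_one]
    exact (iff_true_left hf.isStrictLocalMax).symm
  | succ n hn ih =>
    have hnk : 1 ≤ n + k := by omega
    rw [show n + 1 + k = n + k + 1 by omega]
    rcases lt_trichotomy (f^[n] c) c with h | h | h
    · rw [hf.isStrictLocalMax_iterate_succ_iff_of_lt hnk
        (Real.lt_of_sign_sub_eq_sign_sub (hγ n hn) h),
        hf.isStrictLocalMax_iterate_succ_iff_of_lt hn h, ih]
    · have hnk' : f^[n + k] c = c := Real.eq_of_sign_sub_eq_sign_sub (hγ n hn) h
      have hk' : f^[k] c = c := calc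
        f^[k] c = f^[k] (f^[n] c) := by rw [h]
        _ = f^[n + k] c := by rw [← iterate_add_apply, Nat.add_comm]
        _ = c := hnk'
      have extr := fun {m} (hm : 1 ≤ m) =>
        hf.isStrictLocalMax_or_isStrictLocalMin_iterate (n := m) hm
      exact iff_of_true (hf.isStrictLocalMax_iterate_succ_of_eq (extr hnk) hnk')
        (iff_of_true (hf.isStrictLocalMax_iterate_succ_of_eq (extr hn) h)
          (hf.isStrictLocalMax_iterate_succ_of_eq (extr hk) hk'))
    · rw [hf.isStrictLocalMax_iterate_succ_iff_of_gt hnk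
        (Real.gt_of_sign_sub_eq_sign_sub (hγ n hn) h),
        hf.isStrictLocalMax_iterate_succ_iff_of_gt hn h, ih]
      tauto

end IsUnimodal

theorem minmax_sequence_periodic_general
    (a b x_c : ℝ) (f : ℝ → ℝ)
    (hmap : Set.MapsTo f (Set.Icc a b) (Set.Icc a b))
    (hf : ContDiff ℝ 2 f)
    (hxc : x_c ∈ Set.Ioo a b)
    (hup : ∀ x ∈ Set.Ico a x_c, 0 < deriv f x)
    (hdn : ∀ x ∈ Set.Ioc x_c b, deriv f x < 0)
    (k : ℕ) (hk : 1 ≤ k)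
    (hγ : ∀ n : ℕ, 1 ≤ n →
      Real.sign (f^[n + k] x_c - x_c) = Real.sign (f^[n] x_c - x_c)) :
    ((∀ n : ℕ, 1 ≤ n →
        ((IsLocalMax (f^[n + k]) x_c ↔ IsLocalMax (f^[n]) x_c) ∧
         Real.sign (f^[n + k] x_c - x_c) = Real.sign (f^[n] x_c - x_c))) ∨
     (IsLocalMax (f^[2 * k + 1]) x_c ∧ f^[2 * k + 1] x_c > x_c ∧
      ∀ n : ℕ, 1 ≤ n →
        ((IsLocalMax (f^[n + 2 * k]) x_c ↔ IsLocalMax (f^[n]) x_c) ∧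
         Real.sign (f^[n + 2 * k] x_c - x_c) = Real.sign (f^[n] x_c - x_c)))) ∧
    ((IsLocalMax (f^[k + 1]) x_c ∧ f^[k + 1] x_c > x_c) →
      ∀ n : ℕ, 1 ≤ n →
        ((IsLocalMax (f^[n + k]) x_c ↔ IsLocalMax (f^[n]) x_c) ∧
         Real.sign (f^[n + k] x_c - x_c) = Real.sign (f^[n] x_c - x_c))) := by
  have hu : IsUnimodal f a b x_c := .of_deriv hxc hmap hf.continuous.continuousOn
    (fun x hx => hup x (Ioo_subset_Ico_self hx)) (fun x hx => hdn x (Ioo_subset_Ioc_self hx))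
  have hmax := fun {n} (hn : 1 ≤ n) => hu.isLocalMax_iterate_iff (n := n) hn
  have hper := fun {n} (hn : 1 ≤ n) => hu.isStrictLocalMax_iterate_add_iff hk hγ (n := n) hn
  have period_k (hA : IsStrictLocalMax (f^[k + 1]) x_c) (n : ℕ) (hn : 1 ≤ n) :
      (IsLocalMax (f^[n + k]) x_c ↔ IsLocalMax (f^[n]) x_c) ∧
        Real.sign (f^[n + k] x_c - x_c) = Real.sign (f^[n] x_c - x_c) :=
    ⟨by rw [hmax (by omega), hmax hn, hper hn]; exact iff_true_right hA, hγ n hn⟩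
  refine ⟨?_, fun ⟨hA, _⟩ => period_k ((hmax (by omega)).1 hA)⟩
  by_cases hA : IsStrictLocalMax (f^[k + 1]) x_c
  · exact .inl (period_k hA)
  have hfc : x_c < f x_c :=
    not_le.1 fun h => hA (hu.isStrictLocalMax_iterate_of_map_le h (by omega))
  have hsign (n : ℕ) (hn : 1 ≤ n) :
      Real.sign (f^[n + 2 * k] x_c - x_c) = Real.sign (f^[n] x_c - x_c) := by
    rw [two_mul, ← add_assoc, hγ _ (by omega), hγ n hn]
  refine .inr ⟨(hmax (by omega)).2 ?_, ?_, fun n hn => ⟨?_, hsign n hn⟩⟩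
  · simpa [show k + 1 + k = 2 * k + 1 by omega] using hper (n := k + 1) (by omega)
  · rw [show 2 * k + 1 = 1 + 2 * k by omega]
    exact Real.gt_of_sign_sub_eq_sign_sub (hsign 1 le_rfl) (by rwa [iterate_one])
  · rw [hmax (by omega), hmax hn, two_mul, ← add_assoc, hper (by omega), hper hn]
    tauto

theorem minmax_sequence_periodic
    (a b x_c : ℝ) (f : ℝ → ℝ) (hab : a < b)
    (hmap : Set.MapsTo f (Set.Icc a b) (Set.Icc a b))
    (hf : ContDiff ℝ 2 f)
    (hxc : x_c ∈ Set.Ioo a b)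
    (h2 : deriv (deriv f) x_c < 0)
    (hup : ∀ x ∈ Set.Ico a x_c, 0 < deriv f x)
    (hdn : ∀ x ∈ Set.Ioc x_c b, deriv f x < 0)
    (k : ℕ) (hk : 1 ≤ k)
    (hγ : ∀ n : ℕ, 1 ≤ n →
      Real.sign (f^[n + k] x_c - x_c) = Real.sign (f^[n] x_c - x_c)) :
    ((∀ n : ℕ, 1 ≤ n →
        ((IsLocalMax (f^[n + k]) x_c ↔ IsLocalMax (f^[n]) x_c) ∧
         Real.sign (f^[n + k] x_c - x_c) = Real.sign (f^[n] x_c - x_c))) ∨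
     (IsLocalMax (f^[2 * k + 1]) x_c ∧ f^[2 * k + 1] x_c > x_c ∧
      ∀ n : ℕ, 1 ≤ n →
        ((IsLocalMax (f^[n + 2 * k]) x_c ↔ IsLocalMax (f^[n]) x_c) ∧
         Real.sign (f^[n + 2 * k] x_c - x_c) = Real.sign (f^[n] x_c - x_c)))) ∧
    ((IsLocalMax (f^[k + 1]) x_c ∧ f^[k + 1] x_c > x_c) →
      ∀ n : ℕ, 1 ≤ n →
        ((IsLocalMax (f^[n + k]) x_c ↔ IsLocalMax (f^[n]) x_c) ∧
         Real.sign (f^[n + k] x_c - x_c) = Real.sign (f^[n] x_c - x_c))) :=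
  minmax_sequence_periodic_general a b x_c f hmap hf hxc hup hdn k hk hγ
end

section
/- If f is C² on [a,b] with unique critical point x_c, f''(x_c) < 0, f' > 0 on [a,x_c), f' < 0 on (x_c,b], and f(x_c) ≤ x_c, then every iterate fⁿ has exactly 2 laps, and the topological entropy of f is 0. -/
open Set

/-- \`IsLapNumber g a b m\` : \`m\` is the minimal number of monotone pieces (laps)
of \`g\` on \`[a,b]\`. -/
def IsLapNumber (g : ℝ → ℝ) (a b : ℝ) (m : ℕ) : Prop :=
  IsLeast {m : ℕ | ∃ t : ℕ → ℝ, t 0 = a ∧ t m = b ∧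
    (∀ i < m, t i < t (i + 1)) ∧
    ∀ i < m, MonotoneOn g (Set.Icc (t i) (t (i + 1))) ∨
      AntitoneOn g (Set.Icc (t i) (t (i + 1)))} m

theorem low_critical_value_entropy_zero
    (a b x_c : ℝ) (f : ℝ → ℝ) (hab : a < b)
    (hmap : Set.MapsTo f (Set.Icc a b) (Set.Icc a b))
    (hf : ContDiff ℝ 2 f)
    (hxc : x_c ∈ Set.Ioo a b)
    (h2 : deriv (deriv f) x_c < 0)
    (hup : ∀ x ∈ Set.Ico a x_c, 0 < deriv f x)
    (hdn : ∀ x ∈ Set.Ioc x_c b, deriv f x < 0)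
    (hc : f x_c ≤ x_c)
    (ℓ : ℕ → ℕ) (hℓ : ∀ n : ℕ, 1 ≤ n → IsLapNumber (f^[n]) a b (ℓ n)) :
    (∀ n : ℕ, 1 ≤ n → ℓ n = 2) ∧
    Filter.Tendsto (fun n : ℕ => Real.log (ℓ n) / n) Filter.atTop
      (nhds 0) := by
  obtain ⟨hax, hxb⟩ := hxc
  have hcont : Continuous f := hf.continuous
  -- f strictly monotone on [a, x_c]
  have hmono : StrictMonoOn f (Icc a x_c) := by
    apply strictMonoOn_of_deriv_pos (convex_Icc _ _) hcont.continuousOn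
    intro x hx
    rw [interior_Icc] at hx
    exact hup x ⟨hx.1.le, hx.2⟩
  -- f strictly antitone on [x_c, b]
  have hanti : StrictAntiOn f (Icc x_c b) := by
    apply strictAntiOn_of_deriv_neg (convex_Icc _ _) hcont.continuousOn
    intro x hx
    rw [interior_Icc] at hx
    exact hdn x ⟨hx.1, hx.2.le⟩
  have hsub : Icc a x_c ⊆ Icc a b := Icc_subset_Icc le_rfl hxb.le
  have hsub' : Icc x_c b ⊆ Icc a b := Icc_subset_Icc hax.le le_rfl
  -- f maps [a,x_c] into [a,x_c]
  have hm1 : MapsTo f (Icc a x_c) (Icc a x_c) := by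
    intro x hx
    refine ⟨(hmap (hsub hx)).1, ?_⟩
    exact le_trans (hmono.monotoneOn hx (right_mem_Icc.2 hax.le) hx.2) hc
  -- f maps [x_c,b] into [a,x_c]
  have hm2 : MapsTo f (Icc x_c b) (Icc a x_c) := by
    intro x hx
    refine ⟨(hmap (hsub' hx)).1, ?_⟩
    exact le_trans (hanti.antitoneOn (left_mem_Icc.2 hxb.le) hx hx.1) hc
  -- iterates: strictly monotone on [a,x_c] and map [a,x_c] into itself
  have hiter : ∀ n : ℕ, MapsTo (f^[n]) (Icc a x_c) (Icc a x_c) ∧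
      StrictMonoOn (f^[n]) (Icc a x_c) := by
    intro n
    induction n with
    | zero => exact ⟨fun x hx => by simpa using hx, fun x hx y hy h => by simpa using h⟩
    | succ n ih =>
      refine ⟨?_, ?_⟩
      · intro x hx
        rw [Function.iterate_succ_apply]
        exact ih.1 (hm1 hx)
      · intro x hx y hy hxy
        rw [Function.iterate_succ_apply, Function.iterate_succ_apply]
        exact ih.2 (hm1 hx) (hm1 hy) (hmono hx hy hxy)
  -- key inequalities for iterates with n ≥ 1
  have key : ∀ n : ℕ, 1 ≤ n → f^[n] a < f^[n] x_c ∧ f^[n] b < f^[n] x_c := by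
    intro n hn
    obtain ⟨m, rfl⟩ := Nat.exists_eq_add_of_le hn
    constructor
    · exact (hiter (1 + m)).2 (left_mem_Icc.2 hax.le) (right_mem_Icc.2 hax.le) hax
    · rw [add_comm, Function.iterate_succ_apply, Function.iterate_succ_apply]
      exact (hiter m).2 (hm2 (right_mem_Icc.2 hxb.le))
        (hm2 (left_mem_Icc.2 hxb.le))
        (hanti (left_mem_Icc.2 hxb.le) (right_mem_Icc.2 hxb.le) hxb)
  -- the lap number of f^[n] is 2 for each n ≥ 1
  have lap2 : ∀ n : ℕ, 1 ≤ n → IsLapNumber (f^[n]) a b 2 := by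
    intro n hn
    constructor
    · -- 2 is achieved: partition a, x_c, b
      refine ⟨fun i => if i = 0 then a else if i = 1 then x_c else b, rfl, rfl, ?_, ?_⟩
      · intro i hi
        interval_cases i <;> simpa using (by first | exact hax | exact hxb)
      · intro i hi
        interval_cases i
        · simp only [if_pos rfl]
          left
          intro x hx y hy hxy
          rcases eq_or_lt_of_le hxy with rfl | h
          · exact le_rfl
          · exact ((hiter n).2 (by simpa using hx) (by simpa using hy) h).le
        · simp only [if_neg one_ne_zero, if_pos rfl]
          right
          obtain ⟨m, rfl⟩ := Nat.exists_eq_add_of_le hn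
          rw [add_comm]
          intro x hx y hy hxy
          simp only [Nat.reduceAdd] at hx hy ⊢
          rw [Function.iterate_succ_apply, Function.iterate_succ_apply]
          rcases eq_or_lt_of_le hxy with rfl | h
          · exact le_rfl
          · exact ((hiter m).2.monotoneOn (hm2 hy) (hm2 hx)
              (hanti.antitoneOn hx hy hxy)).trans le_rfl
    · -- lower bound
      rintro m ⟨t, ht0, htm, htlt, hmon⟩
      by_contra hlt
      push_neg at hlt
      interval_cases m
      · rw [ht0] at htm; exact absurd htm hab.ne
      · have hI : Icc (t 0) (t 1) = Icc a b := by rw [ht0, htm]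
        have hxcI : x_c ∈ Icc (t 0) (t 1) := by rw [hI]; exact ⟨hax.le, hxb.le⟩
        have haI : a ∈ Icc (t 0) (t 1) := by rw [hI]; exact ⟨le_rfl, hab.le⟩
        have hbI : b ∈ Icc (t 0) (t 1) := by rw [hI]; exact ⟨hab.le, le_rfl⟩
        rcases hmon 0 one_pos with h | h
        · exact absurd (h hxcI hbI hxb.le) (not_le.2 (key n hn).2)
        · exact absurd (h haI hxcI hax.le) (not_le.2 (key n hn).1)
  have hl2 : ∀ n : ℕ, 1 ≤ n → ℓ n = 2 := fun n hn => (hℓ n hn).unique (lap2 n hn)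
  refine ⟨hl2, ?_⟩
  have : Filter.Tendsto (fun n : ℕ => Real.log 2 / n) Filter.atTop (nhds 0) :=
    tendsto_const_div_atTop_nhds_zero_nat _
  refine this.congr' ?_
  filter_upwards [Filter.eventually_ge_atTop 1] with n hn
  rw [hl2 n hn]
  norm_num
end
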